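/- Let Q be a finite set of size m ≥ 2, n ≥ 1 an integer, p ≥ 1 and σ ≥ 0 reals, and let (z^t)_{t≥0} be a deficit process on Q satisfying the potential-rule moment conditions with parameters n, σ², p. Define, for each t ≥ 0, c_t := m^{1/p} · √(4p² + 2√e · p · σ² · t / n). Then for every t ≥ 0 and every q ∈ Q one has z^t_q ≤ c_t; that is, no quality variable is c_t-disappointed at any time. -/

import Mathlib

open Finset

/-- The potential component `f p u = (u² + 4p²) ^ p` (real power). -/
noncomputable def potComp (p u : ℝ) : ℝ := (u ^ 2 + 4 * p ^ 2) ^ p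

/-- A deficit process on `Q` satisfying the potential-rule moment conditions with
parameters `n`, `σ²`, `p`. -/
def DeficitProcess (Q : Type*) [Fintype Q] (n : ℕ) (σ p : ℝ) (z : ℕ → Q → ℝ) : Prop :=
  (∀ t q, 0 ≤ z t q) ∧ (∀ q, z 0 q = 0) ∧
  ∀ t : ℕ, ∃ Δ : Q → Fin n → ℝ,
    (∀ q k, -1 ≤ Δ q k ∧ Δ q k ≤ 1) ∧
    (∀ q, ∑ k, Δ q k ≤ 0) ∧
    (∀ q, ∑ k, (Δ q k) ^ 2 ≤ σ ^ 2) ∧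
    (∑ q, potComp p (z (t + 1) q) ≤
      (1 / (n : ℝ)) * ∑ k, ∑ q, potComp p (max (z t q + Δ q k) 0))

/-!
With `f u = (u² + 4p²)^p`, track the potential `Φ_t = ∑_q f (z^t_q)`. On `[-(z+1), z+1]` one has
`f'' ≤ 4p²√e (z² + 4p²)^(p-1)`, so a second-order Taylor bound together with the moment
conditions (`∑ Δ ≤ 0` kills the linear term, `∑ Δ² ≤ σ²` bounds the quadratic one) gives
`Φ_{t+1} ≤ Φ_t + (2p²√e σ²/n) ∑_q (z_q² + 4p²)^(p-1)`. The tangent-line inequality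
`a^p + p a^(p-1) (b - a) ≤ b^p` of the convex map `s ↦ s^p` then does the rest: if
`Φ_t ≤ m B_t^p`, it bounds the last sum by `m B_t^(p-1)`, and it yields
`Φ_{t+1} ≤ m (B_t + 2√e pσ²/n)^p = m B_{t+1}^p`, where `B_t = 4p² + 2√e pσ² t/n`. Finally
`(z² + 4p²)^p ≤ Φ_t ≤ m B_t^p` gives `z ≤ m^(1/p) √B_t`.
-/

open Real

theorem ConvexOn.add_mul_sub_le_of_hasDerivAt {S : Set ℝ} {f : ℝ → ℝ} {f' x y : ℝ}
    (hf : ConvexOn ℝ S f) (hx : x ∈ S) (hy : y ∈ S) (hf' : HasDerivAt f f' x) :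
    f x + f' * (y - x) ≤ f y := by
  rcases lt_trichotomy x y with hxy | rfl | hxy
  · have h := hf.le_slope_of_hasDerivAt hx hy hxy hf'
    rw [slope_def_field, le_div_iff₀ (sub_pos.2 hxy)] at h
    linarith
  · simp
  · have h := hf.slope_le_of_hasDerivAt hy hx hxy hf'
    rw [slope_def_field, div_le_iff₀ (sub_pos.2 hxy)] at h
    linarith

theorem Real.rpow_add_mul_sub_le {p x y : ℝ} (hp : 1 ≤ p) (hx : 0 ≤ x) (hy : 0 ≤ y) :
    x ^ p + p * x ^ (p - 1) * (y - x) ≤ y ^ p :=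
  (convexOn_rpow hp).add_mul_sub_le_of_hasDerivAt hx hy (hasDerivAt_rpow_const (Or.inr hp))

theorem le_add_mul_sub_add_sq_of_hasDerivAt_of_le {S : Set ℝ} {f f' f'' : ℝ → ℝ}
    {M x y : ℝ} (hS : Convex ℝ S) (hf : ∀ u ∈ S, HasDerivAt f (f' u) u)
    (hf' : ∀ u ∈ S, HasDerivAt f' (f'' u) u) (hM : ∀ u ∈ S, f'' u ≤ M)
    (hx : x ∈ S) (hy : y ∈ S) :
    f y ≤ f x + f' x * (y - x) + M / 2 * (y - x) ^ 2 := by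
  have hq : ∀ u, HasDerivAt (fun v => M / 2 * v ^ 2) (M * u) u := fun u =>
    ((hasDerivAt_pow 2 u).const_mul (M / 2)).congr_deriv (by ring)
  have hq' : ∀ u, HasDerivAt (fun v => M * v) M u := fun u => by
    simpa using (hasDerivAt_id u).const_mul M
  -- `M / 2 * u ^ 2 - f u` is convex, so it lies above its tangent line at `x`.
  have hconv : ConvexOn ℝ S (fun u => M / 2 * u ^ 2 - f u) :=
    convexOn_of_hasDerivWithinAt2_nonneg hS (f' := fun u => M * u - f' u)
      (f'' := fun u => M - f'' u)
      (fun u hu => ((hq u).sub (hf u hu)).continuousAt.continuousWithinAt)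
      (fun u hu => ((hq u).sub (hf u (interior_subset hu))).hasDerivWithinAt)
      (fun u hu => ((hq' u).sub (hf' u (interior_subset hu))).hasDerivWithinAt)
      (fun u hu => sub_nonneg.2 (hM u (interior_subset hu)))
  have h := hconv.add_mul_sub_le_of_hasDerivAt hx hy ((hq x).sub (hf x hx))
  linear_combination h

theorem Real.sum_rpow_sub_one_le {ι : Type*} [Fintype ι] {x : ι → ℝ} {p B : ℝ}
    (hp : 1 ≤ p) (hx : ∀ i, 0 ≤ x i) (hB : 0 < B) (h : ∑ i, x i ^ p ≤ Fintype.card ι * B ^ p) :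
    ∑ i, x i ^ (p - 1) ≤ Fintype.card ι * B ^ (p - 1) := by
  have hB' : B ^ p = B ^ (p - 1) * B := by rw [← rpow_add_one hB.ne', sub_add_cancel]
  have htangent : ∀ i, p * B * x i ^ (p - 1) ≤ B ^ p + (p - 1) * x i ^ p := fun i => by
    have hxp : x i ^ p = x i ^ (p - 1) * x i := by
      rw [← rpow_add_one' (hx i) (by linarith), sub_add_cancel]
    have h := rpow_add_mul_sub_le hp (hx i) hB.le
    rw [hxp] at h ⊢
    linear_combination h
  have hsum : p * B * ∑ i, x i ^ (p - 1) ≤ p * B * (Fintype.card ι * B ^ (p - 1)) := by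
    calc p * B * ∑ i, x i ^ (p - 1) ≤ ∑ i, (B ^ p + (p - 1) * x i ^ p) := by
          rw [mul_sum]; exact sum_le_sum fun i _ => htangent i
      _ = Fintype.card ι * B ^ p + (p - 1) * ∑ i, x i ^ p := by
          simp only [sum_add_distrib, ← mul_sum, sum_const, card_univ, nsmul_eq_mul]
      _ ≤ Fintype.card ι * B ^ p + (p - 1) * (Fintype.card ι * B ^ p) := by
          gcongr
      _ = p * B * (Fintype.card ι * B ^ (p - 1)) := by rw [hB']; ring
  exact le_of_mul_le_mul_left hsum (by positivity)

namespace PerpetualFairness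

noncomputable def potDeriv (p u : ℝ) : ℝ := 2 * p * u * (u ^ 2 + 4 * p ^ 2) ^ (p - 1)

noncomputable def potDeriv2 (p u : ℝ) : ℝ :=
  2 * p * (u ^ 2 + 4 * p ^ 2) ^ (p - 1) + 4 * p * (p - 1) * u ^ 2 * (u ^ 2 + 4 * p ^ 2) ^ (p - 2)

variable {p : ℝ}

lemma hasDerivAt_potComp (hp : p ≠ 0) (u : ℝ) : HasDerivAt (potComp p) (potDeriv p u) u := by
  have h := ((hasDerivAt_pow 2 u).add_const (4 * p ^ 2)).rpow_const
    (p := p) (Or.inl (by positivity))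
  exact h.congr_deriv (by simp only [potDeriv]; ring)

lemma hasDerivAt_potDeriv (hp : p ≠ 0) (u : ℝ) : HasDerivAt (potDeriv p) (potDeriv2 p u) u := by
  have h := ((hasDerivAt_id u).const_mul (2 * p)).mul
    (((hasDerivAt_pow 2 u).add_const (4 * p ^ 2)).rpow_const
      (p := p - 1) (Or.inl (by positivity)))
  refine h.congr_deriv ?_
  rw [show p - 1 - 1 = p - 2 by ring]
  simp only [potDeriv2, id]
  ring

lemma potDeriv2_le (hp : 1 ≤ p) (u : ℝ) :
    potDeriv2 p u ≤ 4 * p ^ 2 * (u ^ 2 + 4 * p ^ 2) ^ (p - 1) := by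
  have hx : 0 < u ^ 2 + 4 * p ^ 2 := by nlinarith [sq_nonneg u]
  have hsq : u ^ 2 * (u ^ 2 + 4 * p ^ 2) ^ (p - 2) ≤ (u ^ 2 + 4 * p ^ 2) ^ (p - 1) := by
    rw [show p - 1 = p - 2 + 1 by ring, rpow_add_one hx.ne', mul_comm]
    gcongr
    linarith [sq_nonneg p]
  have hpos := rpow_pos_of_pos hx (p - 1)
  unfold potDeriv2
  nlinarith [mul_le_mul_of_nonneg_left hsq (by nlinarith : 0 ≤ 4 * p * (p - 1))]

lemma rpow_sub_one_succ_sq_add_le (hp : 1 ≤ p) {z : ℝ} (hz : 0 ≤ z) :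
    ((z + 1) ^ 2 + 4 * p ^ 2) ^ (p - 1) ≤ √(exp 1) * (z ^ 2 + 4 * p ^ 2) ^ (p - 1) := by
  set w := z ^ 2 + 4 * p ^ 2
  have hw : 0 < w := by nlinarith [sq_nonneg z]
  set d := (2 * z + 1) / w
  -- `w ≥ 2 (p - 1) (2 z + 1)`, so the relative increment `d` of the base costs at most `e^{1/2}`.
  have hd : (p - 1) * d ≤ 1 / 2 := by
    rw [mul_div_assoc', div_le_iff₀ hw]
    nlinarith [sq_nonneg (z - 2 * (p - 1))]
  calc ((z + 1) ^ 2 + 4 * p ^ 2) ^ (p - 1) = w ^ (p - 1) * (1 + d) ^ (p - 1) := by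
        rw [← mul_rpow hw.le (by positivity)]
        congr 1
        simp only [w, d]
        field_simp
        ring
    _ ≤ w ^ (p - 1) * exp d ^ (p - 1) := by
        gcongr
        linarith [add_one_le_exp d]
    _ = w ^ (p - 1) * exp ((p - 1) * d) := by rw [← exp_mul, mul_comm d]
    _ ≤ w ^ (p - 1) * exp (1 / 2) := by gcongr
    _ = √(exp 1) * w ^ (p - 1) := by rw [← exp_half, mul_comm, one_div]

lemma potComp_max_add_le (hp : 1 ≤ p) {z δ : ℝ} (hz : 0 ≤ z) (hδ : -1 ≤ δ ∧ δ ≤ 1) :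
    potComp p (max (z + δ) 0) ≤ potComp p z + potDeriv p z * δ +
      2 * p ^ 2 * √(exp 1) * (z ^ 2 + 4 * p ^ 2) ^ (p - 1) * δ ^ 2 := by
  have hp0 : p ≠ 0 := by positivity
  have hmax : potComp p (max (z + δ) 0) ≤ potComp p (z + δ) := by
    have hsq : max (z + δ) 0 ^ 2 ≤ (z + δ) ^ 2 := by
      rcases le_total 0 (z + δ) with h | h
      · rw [max_eq_left h]
      · rw [max_eq_right h, zero_pow two_ne_zero]; positivity
    exact rpow_le_rpow (by positivity) (by linarith) (by linarith)
  have htaylor := le_add_mul_sub_add_sq_of_hasDerivAt_of_le (convex_Icc (-(z + 1)) (z + 1))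
    (fun u _ => hasDerivAt_potComp hp0 u) (fun u _ => hasDerivAt_potDeriv hp0 u)
    (M := 4 * p ^ 2 * √(exp 1) * (z ^ 2 + 4 * p ^ 2) ^ (p - 1))
    (fun u hu => by
      have hu2 : u ^ 2 ≤ (z + 1) ^ 2 := sq_le_sq' hu.1 hu.2
      calc potDeriv2 p u ≤ 4 * p ^ 2 * (u ^ 2 + 4 * p ^ 2) ^ (p - 1) := potDeriv2_le hp u
        _ ≤ 4 * p ^ 2 * ((z + 1) ^ 2 + 4 * p ^ 2) ^ (p - 1) := by
          gcongr
        _ ≤ 4 * p ^ 2 * (√(exp 1) * (z ^ 2 + 4 * p ^ 2) ^ (p - 1)) := by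
          gcongr; exact rpow_sub_one_succ_sq_add_le hp hz
        _ = _ := by ring)
    (x := z) (y := z + δ) ⟨by linarith, by linarith⟩ ⟨by linarith, by linarith⟩
  refine hmax.trans (htaylor.trans_eq ?_)
  ring

lemma sum_potComp_max_add_le {ι : Type*} [Fintype ι] (hp : 1 ≤ p) {z σ : ℝ} (hz : 0 ≤ z)
    {Δ : ι → ℝ} (hΔ : ∀ k, -1 ≤ Δ k ∧ Δ k ≤ 1) (hsum : ∑ k, Δ k ≤ 0)
    (hsq : ∑ k, Δ k ^ 2 ≤ σ ^ 2) :
    ∑ k, potComp p (max (z + Δ k) 0) ≤ Fintype.card ι * potComp p z +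
      σ ^ 2 * (2 * p ^ 2 * √(exp 1) * (z ^ 2 + 4 * p ^ 2) ^ (p - 1)) := by
  set C := 2 * p ^ 2 * √(exp 1) * (z ^ 2 + 4 * p ^ 2) ^ (p - 1)
  have hC : 0 ≤ C := by positivity
  have hderiv : 0 ≤ potDeriv p z :=
    mul_nonneg (by nlinarith) (rpow_nonneg (by positivity) _)
  calc ∑ k, potComp p (max (z + Δ k) 0)
      ≤ ∑ k, (potComp p z + potDeriv p z * Δ k + C * Δ k ^ 2) :=
        sum_le_sum fun k _ => potComp_max_add_le hp hz (hΔ k)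
    _ = Fintype.card ι * potComp p z + potDeriv p z * ∑ k, Δ k + C * ∑ k, Δ k ^ 2 := by
        simp only [sum_add_distrib, ← mul_sum, sum_const, card_univ, nsmul_eq_mul]
    _ ≤ Fintype.card ι * potComp p z + σ ^ 2 * C := by
        nlinarith [mul_nonpos_of_nonneg_of_nonpos hderiv hsum, mul_le_mul_of_nonneg_left hsq hC]

noncomputable def potentialScale (p σ : ℝ) (n t : ℕ) : ℝ :=
  4 * p ^ 2 + 2 * √(exp 1) * p * σ ^ 2 * (t : ℝ) / (n : ℝ)

variable {Q : Type*} [Fintype Q] {n : ℕ} {σ : ℝ} {z : ℕ → Q → ℝ}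

lemma potentialScale_pos (hp : 1 ≤ p) (t : ℕ) : 0 < potentialScale p σ n t := by
  have : 0 < p := by linarith
  unfold potentialScale; positivity

lemma potentialScale_succ (t : ℕ) :
    potentialScale p σ n (t + 1) = potentialScale p σ n t + 2 * √(exp 1) * p * σ ^ 2 / n := by
  simp only [potentialScale]; push_cast; ring

lemma potential_succ_le (hp : 1 ≤ p) (hproc : DeficitProcess Q n σ p z) (t : ℕ) :
    ∑ q, potComp p (z (t + 1) q) ≤ ∑ q, potComp p (z t q) +
      σ ^ 2 / n * (2 * p ^ 2 * √(exp 1)) * ∑ q, (z t q ^ 2 + 4 * p ^ 2) ^ (p - 1) := by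
  obtain ⟨hz, -, hstep⟩ := hproc
  obtain ⟨Δ, hΔ, hsum, hsq, hΦ⟩ := hstep t
  have hΦt : 0 ≤ ∑ q, potComp p (z t q) := sum_nonneg fun q _ => rpow_nonneg (by positivity) _
  calc ∑ q, potComp p (z (t + 1) q)
      ≤ 1 / n * ∑ q, ∑ k, potComp p (max (z t q + Δ q k) 0) := by rwa [sum_comm]
    _ ≤ 1 / n * ∑ q, (n * potComp p (z t q) +
          σ ^ 2 * (2 * p ^ 2 * √(exp 1) * (z t q ^ 2 + 4 * p ^ 2) ^ (p - 1))) := by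
        gcongr with q
        simpa using sum_potComp_max_add_le hp (hz t q) (hΔ q) (hsum q) (hsq q)
    _ = n / n * ∑ q, potComp p (z t q) +
          σ ^ 2 / n * (2 * p ^ 2 * √(exp 1)) * ∑ q, (z t q ^ 2 + 4 * p ^ 2) ^ (p - 1) := by
        rw [sum_add_distrib, ← mul_sum, ← mul_sum, ← mul_sum]; ring
    _ ≤ _ := by gcongr; exact mul_le_of_le_one_left hΦt (div_self_le_one _)

lemma potential_le (hp : 1 ≤ p) (hproc : DeficitProcess Q n σ p z) (t : ℕ) :
    ∑ q, potComp p (z t q) ≤ Fintype.card Q * potentialScale p σ n t ^ p := by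
  induction t with
  | zero => simp [potComp, potentialScale, hproc.2.1]
  | succ t ih =>
    set B := potentialScale p σ n t
    set a := 2 * √(exp 1) * p * σ ^ 2 / n
    have hB := potentialScale_pos (σ := σ) (n := n) hp t
    have hmean : ∑ q, (z t q ^ 2 + 4 * p ^ 2) ^ (p - 1) ≤ Fintype.card Q * B ^ (p - 1) :=
      sum_rpow_sub_one_le hp (fun q => by positivity) hB ih
    calc ∑ q, potComp p (z (t + 1) q)
        ≤ Fintype.card Q * B ^ p +
            σ ^ 2 / n * (2 * p ^ 2 * √(exp 1)) * (Fintype.card Q * B ^ (p - 1)) := by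
          refine (potential_succ_le hp hproc t).trans ?_
          gcongr
      _ = Fintype.card Q * (B ^ p + p * B ^ (p - 1) * ((B + a) - B)) := by ring
      _ ≤ Fintype.card Q * (B + a) ^ p := by
          gcongr
          exact rpow_add_mul_sub_le hp hB.le (by positivity)
      _ = Fintype.card Q * potentialScale p σ n (t + 1) ^ p := by rw [potentialScale_succ]

lemma le_rpow_mul_sqrt_of_sum_potComp_le (hp : 1 ≤ p) {x : Q → ℝ} {B : ℝ}
    (hx : ∀ q, 0 ≤ x q) (hB : 0 < B) (h : ∑ q, potComp p (x q) ≤ Fintype.card Q * B ^ p) (q : Q) :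
    x q ≤ (Fintype.card Q : ℝ) ^ (1 / p) * √B := by
  set c := (Fintype.card Q : ℝ) ^ (1 / p)
  have hp0 : 0 < p := by linarith
  have hc : 1 ≤ c := one_le_rpow (by exact_mod_cast Fintype.card_pos_iff.2 ⟨q⟩) (by positivity)
  have hcB : (c * B) ^ p = Fintype.card Q * B ^ p := by
    rw [mul_rpow (by positivity) hB.le, ← rpow_mul (by positivity), one_div_mul_cancel hp0.ne',
      rpow_one]
  have hroot : x q ^ 2 + 4 * p ^ 2 ≤ c * B := by
    rw [← rpow_le_rpow_iff (by positivity) (by positivity) hp0, hcB]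
    exact (single_le_sum (f := fun q => potComp p (x q))
      (fun q _ => rpow_nonneg (by positivity) p) (mem_univ q)).trans h
  rw [← pow_le_pow_iff_left₀ (hx q) (by positivity) two_ne_zero, mul_pow, sq_sqrt hB.le]
  nlinarith

end PerpetualFairness

open PerpetualFairness

theorem perpetual_ct_fairness_general (Q : Type*) [Fintype Q]
    (n : ℕ) (p σ : ℝ) (hp : 1 ≤ p)
    (z : ℕ → Q → ℝ) (hproc : DeficitProcess Q n σ p z) :
    ∀ t : ℕ, ∀ q : Q,
      z t q ≤ (Fintype.card Q : ℝ) ^ (1 / p) *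
        Real.sqrt (4 * p ^ 2 + 2 * Real.sqrt (Real.exp 1) * p * σ ^ 2 * (t : ℝ) / (n : ℝ)) :=
  fun t => le_rpow_mul_sqrt_of_sum_potComp_le hp (hproc.1 t) (potentialScale_pos hp t)
    (potential_le hp hproc t)

/-- **Explicit perpetual `c_t`-fairness.** For a deficit process on a set of size
`m ≥ 2` satisfying the moment conditions, setting
`c_t := m ^ (1/p) * √(4p² + 2 √e p σ² t / n)`, at every time `t` no quality
variable is `c_t`-disappointed: `z t q ≤ c_t` for every `q`. -/
theorem perpetual_ct_fairness (Q : Type*) [Fintype Q] (hm : 2 ≤ Fintype.card Q)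
    (n : ℕ) (hn : 1 ≤ n) (p σ : ℝ) (hp : 1 ≤ p) (hσ : 0 ≤ σ)
    (z : ℕ → Q → ℝ) (hproc : DeficitProcess Q n σ p z) :
    ∀ t : ℕ, ∀ q : Q,
      z t q ≤ (Fintype.card Q : ℝ) ^ (1 / p) *
        Real.sqrt (4 * p ^ 2 + 2 * Real.sqrt (Real.exp 1) * p * σ ^ 2 * (t : ℝ) / (n : ℝ)) :=
  perpetual_ct_fairness_general Q n p σ hp z hproc
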